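/- For every LTL formula φ and every alternating LTL formula γ, the equivalence φ R γ ≡ γ holds, i.e., for every alphabet Σ and every infinite word w ∈ Σ^ω, w ⊨ φ R γ if and only if w ⊨ γ. -/
import Mathlib


/-- Syntax of LTL formulae over atomic propositions `AP`. -/
inductive LTL (AP : Type) : Type
  | tt    : LTL AP
  | atom  : AP → LTL AP
  | not   : LTL AP → LTL AP
  | or    : LTL AP → LTL AP → LTL AP
  | and   : LTL AP → LTL AP → LTL AP
  | next  : LTL AP → LTL AP
  | untl  : LTL AP → LTL AP → LTL AP

namespace LTL

/-- Derived operator `F` (eventually). -/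
def F {AP : Type} (φ : LTL AP) : LTL AP := untl tt φ

/-- Derived operator `G` (always). -/
def G {AP : Type} (φ : LTL AP) : LTL AP := not (F (not φ))

/-- Derived operator `R` (release). -/
def R {AP : Type} (φ ψ : LTL AP) : LTL AP := not (untl (not φ) (not ψ))

end LTL

/-- The `k`-th suffix of an infinite word. -/
def suffix {AP : Type} (w : ℕ → Set AP) (k : ℕ) : ℕ → Set AP :=
  fun i => w (i + k)

/-- Concatenation of a finite word `u` with an infinite word `w`. -/
def cat {AP : Type} (u : List (Set AP)) (w : ℕ → Set AP) : ℕ → Set AP :=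
  fun i => if h : i < u.length then u.get ⟨i, h⟩ else w (i - u.length)

/-- Satisfaction relation `w ⊨ φ` of LTL over infinite words `w : ℕ → Set AP`. -/
def Sat {AP : Type} : LTL AP → (ℕ → Set AP) → Prop
  | .tt, _ => True
  | .atom a, w => a ∈ w 0
  | .not φ, w => ¬ Sat φ w
  | .or φ ψ, w => Sat φ w ∨ Sat ψ w
  | .and φ ψ, w => Sat φ w ∧ Sat ψ w
  | .next φ, w => Sat φ (suffix w 1)
  | .untl φ ψ, w => ∃ i, Sat ψ (suffix w i) ∧ ∀ j < i, Sat φ (suffix w j)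

/-- Pure eventuality formulae: μ ::= Fφ | μ∨μ | μ∧μ | Xμ | φUμ | μRμ | Gμ. -/
inductive PureEventuality {AP : Type} : LTL AP → Prop
  | fin (φ : LTL AP) : PureEventuality (LTL.F φ)
  | or {μ₁ μ₂ : LTL AP} : PureEventuality μ₁ → PureEventuality μ₂ →
      PureEventuality (LTL.or μ₁ μ₂)
  | and {μ₁ μ₂ : LTL AP} : PureEventuality μ₁ → PureEventuality μ₂ →
      PureEventuality (LTL.and μ₁ μ₂)
  | next {μ : LTL AP} : PureEventuality μ → PureEventuality (LTL.next μ)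
  | untl (φ : LTL AP) {μ : LTL AP} : PureEventuality μ →
      PureEventuality (LTL.untl φ μ)
  | rel {μ₁ μ₂ : LTL AP} : PureEventuality μ₁ → PureEventuality μ₂ →
      PureEventuality (LTL.R μ₁ μ₂)
  | glob {μ : LTL AP} : PureEventuality μ → PureEventuality (LTL.G μ)

/-- Pure universality formulae: ν ::= Gφ | ν∨ν | ν∧ν | Xν | νUν | φRν | Fν. -/
inductive PureUniversality {AP : Type} : LTL AP → Prop
  | glob (φ : LTL AP) : PureUniversality (LTL.G φ)
  | or {ν₁ ν₂ : LTL AP} : PureUniversality ν₁ → PureUniversality ν₂ →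
      PureUniversality (LTL.or ν₁ ν₂)
  | and {ν₁ ν₂ : LTL AP} : PureUniversality ν₁ → PureUniversality ν₂ →
      PureUniversality (LTL.and ν₁ ν₂)
  | next {ν : LTL AP} : PureUniversality ν → PureUniversality (LTL.next ν)
  | untl {ν₁ ν₂ : LTL AP} : PureUniversality ν₁ → PureUniversality ν₂ →
      PureUniversality (LTL.untl ν₁ ν₂)
  | rel (φ : LTL AP) {ν : LTL AP} : PureUniversality ν →
      PureUniversality (LTL.R φ ν)
  | fin {ν : LTL AP} : PureUniversality ν → PureUniversality (LTL.F ν)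

/-- Alternating formulae: ξ ::= Gμ | Fν | ξ∨ξ | ξ∧ξ | Xξ | φUξ | φRξ | Fξ | Gξ. -/
inductive Alternating {AP : Type} : LTL AP → Prop
  | globEv {μ : LTL AP} : PureEventuality μ → Alternating (LTL.G μ)
  | finUniv {ν : LTL AP} : PureUniversality ν → Alternating (LTL.F ν)
  | or {ξ₁ ξ₂ : LTL AP} : Alternating ξ₁ → Alternating ξ₂ →
      Alternating (LTL.or ξ₁ ξ₂)
  | and {ξ₁ ξ₂ : LTL AP} : Alternating ξ₁ → Alternating ξ₂ →
      Alternating (LTL.and ξ₁ ξ₂)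
  | next {ξ : LTL AP} : Alternating ξ → Alternating (LTL.next ξ)
  | untl (φ : LTL AP) {ξ : LTL AP} : Alternating ξ → Alternating (LTL.untl φ ξ)
  | rel (φ : LTL AP) {ξ : LTL AP} : Alternating ξ → Alternating (LTL.R φ ξ)
  | fin {ξ : LTL AP} : Alternating ξ → Alternating (LTL.F ξ)
  | glob {ξ : LTL AP} : Alternating ξ → Alternating (LTL.G ξ)


lemma suffix_suffix {AP : Type} (w : ℕ → Set AP) (k j : ℕ) :
    suffix (suffix w k) j = suffix w (j + k) := by
  funext i; simp [suffix, Nat.add_assoc]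

lemma suffix_zero {AP : Type} (w : ℕ → Set AP) : suffix w 0 = w := by
  funext i; simp [suffix]

lemma sat_G {AP : Type} (φ : LTL AP) (w : ℕ → Set AP) :
    Sat (LTL.G φ) w ↔ ∀ i, Sat φ (suffix w i) := by
  simp [LTL.G, LTL.F, Sat]

lemma sat_untl {AP : Type} (φ ψ : LTL AP) (w : ℕ → Set AP) :
    Sat (LTL.untl φ ψ) w ↔
      ∃ i, Sat ψ (suffix w i) ∧ ∀ j < i, Sat φ (suffix w j) := Iff.rfl

lemma sat_R {AP : Type} (φ ψ : LTL AP) (w : ℕ → Set AP) :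
    Sat (LTL.R φ ψ) w ↔
      ¬ ∃ i, ¬ Sat ψ (suffix w i) ∧ ∀ j < i, ¬ Sat φ (suffix w j) := by
  simp [LTL.R, Sat]

lemma sat_R_self {AP : Type} {φ ψ : LTL AP} {w : ℕ → Set AP}
    (h : Sat (LTL.R φ ψ) w) : Sat ψ w := by
  rw [sat_R] at h
  by_contra hc
  exact h ⟨0, by rwa [suffix_zero], fun j hj => absurd hj (Nat.not_lt_zero j)⟩

lemma univ_suffix {AP : Type} {ν : LTL AP} (h : PureUniversality ν) :
    ∀ w, Sat ν w → ∀ k, Sat ν (suffix w k) := by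
  induction h with
  | glob φ =>
      intro w hw k
      rw [sat_G] at hw ⊢
      intro i; rw [suffix_suffix]; exact hw _
  | or h1 h2 ih1 ih2 =>
      intro w hw k
      rcases hw with h | h
      · exact Or.inl (ih1 w h k)
      · exact Or.inr (ih2 w h k)
  | and h1 h2 ih1 ih2 =>
      intro w hw k
      exact ⟨ih1 w hw.1 k, ih2 w hw.2 k⟩
  | next h ih =>
      intro w hw k
      show Sat _ (suffix (suffix w k) 1)
      rw [suffix_suffix]
      have := ih _ hw k
      rwa [suffix_suffix, Nat.add_comm] at this
  | untl h1 h2 ih1 ih2 =>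
      intro w hw k
      obtain ⟨i, hi, hj⟩ := hw
      by_cases hk : k ≤ i
      · refine ⟨i - k, ?_, ?_⟩
        · rw [suffix_suffix]
          have : i - k + k = i := by omega
          rwa [this]
        · intro j hji
          rw [suffix_suffix]
          exact hj _ (by omega)
      · refine ⟨0, ?_, fun j hj => absurd hj (Nat.not_lt_zero j)⟩
        rw [suffix_zero]
        have := ih2 _ hi (k - i)
        rw [suffix_suffix] at this
        have e : k - i + i = k := by omega
        rwa [e] at this
  | rel φ h ih =>
      intro w hw k
      have hν : Sat _ w := sat_R_self hw
      rw [sat_R]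
      rintro ⟨i, hni, -⟩
      rw [suffix_suffix] at hni
      exact hni (ih _ hν _)
  | fin h ih =>
      intro w hw k
      obtain ⟨i, hi, -⟩ := hw
      by_cases hk : k ≤ i
      · refine ⟨i - k, ?_, fun j _ => trivial⟩
        rw [suffix_suffix]
        have : i - k + k = i := by omega
        rwa [this]
      · refine ⟨0, ?_, fun j _ => trivial⟩
        rw [suffix_zero]
        have := ih _ hi (k - i)
        rw [suffix_suffix] at this
        have e : k - i + i = k := by omega
        rwa [e] at this

lemma alt_suffix {AP : Type} {ξ : LTL AP} (h : Alternating ξ) :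
    ∀ w, Sat ξ w → ∀ k, Sat ξ (suffix w k) := by
  induction h with
  | globEv hμ =>
      intro w hw k
      rw [sat_G] at hw ⊢
      intro i; rw [suffix_suffix]; exact hw _
  | finUniv hν =>
      intro w hw k
      obtain ⟨i, hi, -⟩ := hw
      by_cases hk : k ≤ i
      · refine ⟨i - k, ?_, fun j _ => trivial⟩
        rw [suffix_suffix]
        have : i - k + k = i := by omega
        rwa [this]
      · refine ⟨0, ?_, fun j _ => trivial⟩
        rw [suffix_zero]
        have := univ_suffix hν _ hi (k - i)
        rw [suffix_suffix] at this
        have e : k - i + i = k := by omega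
        rwa [e] at this
  | or h1 h2 ih1 ih2 =>
      intro w hw k
      rcases hw with h | h
      · exact Or.inl (ih1 w h k)
      · exact Or.inr (ih2 w h k)
  | and h1 h2 ih1 ih2 =>
      intro w hw k
      exact ⟨ih1 w hw.1 k, ih2 w hw.2 k⟩
  | next h ih =>
      intro w hw k
      show Sat _ (suffix (suffix w k) 1)
      rw [suffix_suffix]
      have := ih _ hw k
      rwa [suffix_suffix, Nat.add_comm] at this
  | untl φ h ih =>
      intro w hw k
      obtain ⟨i, hi, hj⟩ := hw
      by_cases hk : k ≤ i
      · refine ⟨i - k, ?_, ?_⟩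
        · rw [suffix_suffix]
          have : i - k + k = i := by omega
          rwa [this]
        · intro j hji
          rw [suffix_suffix]
          exact hj _ (by omega)
      · refine ⟨0, ?_, fun j hj => absurd hj (Nat.not_lt_zero j)⟩
        rw [suffix_zero]
        have := ih _ hi (k - i)
        rw [suffix_suffix] at this
        have e : k - i + i = k := by omega
        rwa [e] at this
  | rel φ h ih =>
      intro w hw k
      have hξ : Sat _ w := sat_R_self hw
      rw [sat_R]
      rintro ⟨i, hni, -⟩
      rw [suffix_suffix] at hni
      exact hni (ih _ hξ _)
  | fin h ih =>
      intro w hw k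
      obtain ⟨i, hi, -⟩ := hw
      by_cases hk : k ≤ i
      · refine ⟨i - k, ?_, fun j _ => trivial⟩
        rw [suffix_suffix]
        have : i - k + k = i := by omega
        rwa [this]
      · refine ⟨0, ?_, fun j _ => trivial⟩
        rw [suffix_zero]
        have := ih _ hi (k - i)
        rw [suffix_suffix] at this
        have e : k - i + i = k := by omega
        rwa [e] at this
  | glob h ih =>
      intro w hw k
      rw [sat_G] at hw ⊢
      intro i; rw [suffix_suffix]; exact hw _

theorem release_alternating_equiv :
    ∀ (AP : Type) (φ γ : LTL AP), Alternating γ →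
      ∀ (w : ℕ → Set AP), Sat (LTL.R φ γ) w ↔ Sat γ w := by
  intro AP φ γ hγ w
  constructor
  · exact sat_R_self
  · intro hγw
    rw [sat_R]
    rintro ⟨i, hni, -⟩
    exact hni (alt_suffix hγ w hγw i)
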